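/- Let m ≥ 1 be an integer, a, b ∈ ℝ, and t ∈ ℝ. Then cosh(t/4) · (4 sinh²(t/(2m)) + 4a)^m · (4 sinh²(t/(2m)) + 4b)^m = Σ_{j=0}^{m} Σ_{l=0}^{m} d_{m,j,l} · 4 cosh(t/4) cosh(jt/m) cosh(lt/m), where d_{m,j,l} = 4^{2m−1} Σ_{k=j}^{m} Σ_{n=l}^{m} C(m,k) C(m,n) a^{m−k} b^{m−n} a_{k,j} a_{n,l}, with a_{0,0} := 1 and, for k ≥ 1, a_{k,0} = (−1)^k 2^{−2k} C(2k,k), a_{k,k} = 2^{1−2k}, and a_{k,j} = (−1)^{k−j} 2^{1−2k} C(2k, k−j) for 0 < j < k. -/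

import Mathlib

/-- The coefficients `a_{k,j}` in the expansion of `sinh^{2k}` as a finite cosh-series,
with `a_{0,0} = 1`. -/
noncomputable def acoef (k j : ℕ) : ℝ :=
  if j = 0 then (-1 : ℝ) ^ k * (2 : ℝ) ^ (-(2 * k : ℤ)) * (Nat.choose (2 * k) k : ℝ)
  else (-1 : ℝ) ^ (k - j) * (2 : ℝ) ^ ((1 : ℤ) - 2 * k) * (Nat.choose (2 * k) (k - j) : ℝ)

/-- The coefficients
`d_{m,j,l} = 4^{2m−1} ∑_{k=j}^{m} ∑_{n=l}^{m} C(m,k) C(m,n) a^{m−k} b^{m−n} a_{k,j} a_{n,l}`. -/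
noncomputable def dcoef (m : ℕ) (a b : ℝ) (j l : ℕ) : ℝ :=
  (4 : ℝ) ^ (2 * m - 1) *
    ∑ k ∈ Finset.Icc j m, ∑ n ∈ Finset.Icc l m,
      (Nat.choose m k : ℝ) * (Nat.choose m n : ℝ) * a ^ (m - k) * b ^ (m - n) *
        acoef k j * acoef n l

/-! Writing `2 sinh x = eˣ - e⁻ˣ`, the binomial theorem expresses `4ᵏ sinh²ᵏ x` as
`∑ᵢ C(2k,i) (-1)ⁱ e^{2(i-k)x}`; pairing the terms `i = k ± j` gives the cosh-series
`sinh²ᵏ x = ∑ⱼ a_{k,j} cosh(2jx)`. Expanding `(sinh² x + y)ᵐ` binomially and swapping the two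
sums then gives a cosh-series whose coefficients `∑ₖ C(m,k) yᵐ⁻ᵏ a_{k,j}` make `d_{m,j,l}`
factor as a product; at `x = t/(2m)` the theorem is the product of two such series. -/

open Finset Real

theorem sum_range_two_mul_add_one_eq_sum_pairs {M : Type*} [AddCommMonoid M] (f : ℕ → M)
    (k : ℕ) :
    ∑ i ∈ range (2 * k + 1), f i =
      ∑ j ∈ range (k + 1), if j = 0 then f k else f (k - j) + f (k + j) := by
  rw [show 2 * k + 1 = k + (k + 1) by ring, sum_range_add, sum_range_succ' (fun i => f (k + i)),
    sum_range_succ', ← sum_range_reflect, if_pos rfl]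
  simp only [Nat.add_one_ne_zero, if_false, add_zero, sum_add_distrib, ← add_assoc]
  congr 3 with j
  rw [Nat.sub_sub, add_comm 1 j]

lemma acoef_zero_right (k : ℕ) :
    acoef k 0 = (-1) ^ k * (2 * k).choose k / 2 ^ (2 * k) := by
  rw [acoef, if_pos rfl, zpow_neg, show (2 : ℝ) ^ (2 * (k : ℤ)) = 2 ^ (2 * k) by norm_cast]
  ring

lemma acoef_of_ne_zero {j : ℕ} (k : ℕ) (hj : j ≠ 0) :
    acoef k j = 2 * (-1) ^ (k - j) * (2 * k).choose (k - j) / 2 ^ (2 * k) := by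
  rw [acoef, if_neg hj, zpow_sub₀ two_ne_zero, zpow_one,
    show (2 : ℝ) ^ (2 * (k : ℤ)) = 2 ^ (2 * k) by norm_cast]
  ring

lemma sinh_pow_two_mul (k : ℕ) (x : ℝ) :
    sinh x ^ (2 * k) = ∑ j ∈ range (k + 1), acoef k j * cosh (2 * j * x) := by
  set u := exp x
  set v := exp (-x)
  have huv : u * v = 1 := by rw [← exp_add, add_neg_cancel, exp_zero]
  set f : ℕ → ℝ := fun i => u ^ i * (-v) ^ (2 * k - i) * (2 * k).choose i
  have hcosh (j : ℕ) : 2 * cosh (2 * j * x) = u ^ (2 * j) + v ^ (2 * j) := by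
    rw [cosh_eq, ← exp_nat_mul, ← exp_nat_mul]
    push_cast
    ring_nf
  have hpair {j : ℕ} (hj : j ≤ k) :
      f (k - j) + f (k + j) =
        (-1) ^ (k - j) * (2 * k).choose (k - j) * (u ^ (2 * j) + v ^ (2 * j)) := by
    obtain ⟨r, rfl⟩ := Nat.exists_eq_add_of_le' hj
    have hr : (u * v) ^ r = 1 := by rw [huv, one_pow]
    simp only [f, Nat.add_sub_cancel]
    rw [show 2 * (r + j) - r = r + 2 * j by omega, show 2 * (r + j) - (r + j + j) = r by omega,
      Nat.choose_symm_of_eq_add (show 2 * (r + j) = r + j + j + r by omega), neg_pow, neg_pow v,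
      pow_add (-1 : ℝ), (even_two_mul j).neg_one_pow]
    linear_combination ((-1) ^ r * (2 * (r + j)).choose r * (u ^ (2 * j) + v ^ (2 * j))) * hr
  have hexpand : (2 * sinh x) ^ (2 * k) = ∑ i ∈ range (2 * k + 1), f i := by
    rw [sinh_eq, mul_div_cancel₀ _ two_ne_zero, sub_eq_add_neg, add_pow]
  refine mul_left_cancel₀ (pow_ne_zero (2 * k) (two_ne_zero' ℝ)) ?_
  rw [← mul_pow, hexpand, sum_range_two_mul_add_one_eq_sum_pairs, mul_sum]
  refine sum_congr rfl fun j hj => ?_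
  split_ifs with hj0
  · subst hj0
    simp only [f, acoef_zero_right, Nat.cast_zero, mul_zero, zero_mul, cosh_zero, mul_one,
      show 2 * k - k = k by omega]
    rw [neg_pow, mul_div_cancel₀ _ (pow_ne_zero _ two_ne_zero), mul_left_comm, ← mul_pow, huv,
      one_pow, mul_one]
  · rw [hpair (Nat.le_of_lt_succ (mem_range.1 hj)), acoef_of_ne_zero k hj0, ← hcosh]
    field_simp

noncomputable def ccoef (m : ℕ) (y : ℝ) (j : ℕ) : ℝ :=
  ∑ k ∈ Icc j m, (m.choose k : ℝ) * y ^ (m - k) * acoef k j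

lemma sinh_sq_add_pow (m : ℕ) (y x : ℝ) :
    (sinh x ^ 2 + y) ^ m = ∑ j ∈ range (m + 1), ccoef m y j * cosh (2 * j * x) := by
  simp_rw [add_pow, ← pow_mul, sinh_pow_two_mul, sum_mul, ccoef, sum_mul]
  rw [sum_comm' (t' := range (m + 1)) (s' := fun j => Icc j m)
    (by intro k j; simp only [mem_range, mem_Icc]; omega)]
  exact sum_congr rfl fun j _ => sum_congr rfl fun k _ => by ring

lemma dcoef_eq_mul_ccoef (m : ℕ) (a b : ℝ) (j l : ℕ) :
    dcoef m a b j l = 4 ^ (2 * m - 1) * (ccoef m a j * ccoef m b l) := by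
  rw [dcoef, ccoef, ccoef, sum_mul_sum]
  exact congrArg _ <| sum_congr rfl fun k _ => sum_congr rfl fun n _ => by ring

/-- **Lemma 9 of the paper.** For `m ≥ 1`, `a b t : ℝ`,
`cosh(t/4) (4 sinh²(t/(2m)) + 4a)^m (4 sinh²(t/(2m)) + 4b)^m
  = ∑_{j=0}^{m} ∑_{l=0}^{m} d_{m,j,l} · 4 cosh(t/4) cosh(jt/m) cosh(lt/m)`. -/
theorem cosh_expansion_j (m : ℕ) (hm : 1 ≤ m) (a b t : ℝ) :
    Real.cosh (t / 4) * (4 * Real.sinh (t / (2 * m)) ^ 2 + 4 * a) ^ m *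
        (4 * Real.sinh (t / (2 * m)) ^ 2 + 4 * b) ^ m =
      ∑ j ∈ Finset.range (m + 1), ∑ l ∈ Finset.range (m + 1),
        dcoef m a b j l *
          (4 * Real.cosh (t / 4) * Real.cosh (j * t / m) * Real.cosh (l * t / m)) := by
  have hm0 : (m : ℝ) ≠ 0 := by positivity
  have hexpand (y : ℝ) : (4 * sinh (t / (2 * m)) ^ 2 + 4 * y) ^ m =
      4 ^ m * ∑ j ∈ range (m + 1), ccoef m y j * cosh (j * t / m) := by
    rw [← mul_add, mul_pow, sinh_sq_add_pow]
    congr! 4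
    field_simp
  have h4 : (4 : ℝ) ^ (2 * m - 1) * 4 = 4 ^ m * 4 ^ m := by
    rw [← pow_succ, ← pow_add, Nat.sub_add_cancel (by omega), two_mul]
  calc _ = 4 ^ m * 4 ^ m * cosh (t / 4) *
          ((∑ j ∈ range (m + 1), ccoef m a j * cosh (j * t / m)) *
            ∑ l ∈ range (m + 1), ccoef m b l * cosh (l * t / m)) := by
        rw [hexpand, hexpand]
        ring
    _ = _ := by
      simp_rw [sum_mul_sum, mul_sum, dcoef_eq_mul_ccoef, ← h4]
      exact sum_congr rfl fun j _ => sum_congr rfl fun l _ => by ring
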